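/- arXiv:math/0212171 — 2 statements merged into one kernel-verified Lean document; each statement's English description precedes it below -/
import Mathlib

section
/- Let n ≥ 1 and let σ satisfy 2/n < σ < 2/(n-2) (no upper restriction if n ≤ 2). Define δ(r) = n(1/2 - 1/r). Then there exist real numbers q, r, s, k with: (i) (q, r) is an admissible pair, i.e. 2 ≤ r < 2n/(n-2) and 2/q = δ(r); (ii) 1/r' = 1/r + 2σ/s and 1/q' = 1/q + 2σ/k (where p' denotes the Hölder conjugate of p); (iii) 0 < 2/k < δ(s) < 1. -/
/-- An admissible pair in dimension `n`: `2 ≤ r`, `r < 2n/(n-2)` if `n ≥ 3`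
(no upper restriction if `n = 1`, `r < ∞` automatic if `n = 2`), and `2/q = δ(r)`
where `δ(r) = n (1/2 - 1/r)`. -/
def IsAdmissiblePair (n : ℕ) (q r : ℝ) : Prop :=
  2 ≤ r ∧ (3 ≤ n → r < 2 * n / (n - 2)) ∧ 2 / q = n * (1 / 2 - 1 / r)

/-- Lemma 3.1: under `2/n < σ < 2/(n-2)`, one can find `q, r, s, k` with `(q,r)`
admissible, `1/r' = 1/r + 2σ/s`, `1/q' = 1/q + 2σ/k` (conjugate exponents), and
`0 < 2/k < δ(s) < 1`. -/
theorem lemma_3_1 (n : ℕ) (σ : ℝ) (hn : 1 ≤ n)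
    (hσ₁ : 2 / n < σ) (hσ₂ : 3 ≤ n → σ < 2 / ((n : ℝ) - 2)) :
    ∃ q r s k : ℝ, IsAdmissiblePair n q r ∧
      1 - 1 / r = 1 / r + 2 * σ / s ∧
      1 - 1 / q = 1 / q + 2 * σ / k ∧
      0 < 2 / k ∧ 2 / k < n * (1 / 2 - 1 / s) ∧ n * (1 / 2 - 1 / s) < 1 := by
  have hn1 : (1:ℝ) ≤ (n:ℝ) := by exact_mod_cast hn
  have hn0 : (0:ℝ) < (n:ℝ) := by linarith
  have hσ0 : 0 < σ := lt_trans (by positivity) hσ₁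
  have hσn : 2 < (n:ℝ) * σ := by
    rw [div_lt_iff₀ hn0] at hσ₁; linarith
  -- choose d = δ(r) in the open interval (max (σ(n-2)/2) 0, min 1 (n/2))
  obtain ⟨d, hd0, hd1, hdn, hdσ⟩ :
      ∃ d : ℝ, 0 < d ∧ d < 1 ∧ d < (n:ℝ)/2 ∧ σ*((n:ℝ)-2)/2 < d := by
    have hlt : max (σ*((n:ℝ)-2)/2) 0 < min 1 ((n:ℝ)/2) := by
      refine max_lt ?_ (lt_min one_pos (by linarith))
      rcases le_or_gt (n:ℝ) 2 with h | h
      · have h1 : σ*((n:ℝ)-2)/2 ≤ 0 := by nlinarith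
        have h2 : (0:ℝ) < min 1 ((n:ℝ)/2) := lt_min one_pos (by linarith)
        linarith
      · have h3 : 3 ≤ n := by
          have h2n : 2 < n := by exact_mod_cast h
          omega
        have hn2 : (0:ℝ) < (n:ℝ) - 2 := by linarith
        have h1 : σ * ((n:ℝ)-2) < 2 := by
          have := hσ₂ h3
          rw [lt_div_iff₀ hn2] at this; linarith
        have h3' : (3:ℝ) ≤ (n:ℝ) := by exact_mod_cast h3
        exact lt_min (by linarith) (by linarith)
    refine ⟨(max (σ*((n:ℝ)-2)/2) 0 + min 1 ((n:ℝ)/2))/2, ?_, ?_, ?_, ?_⟩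
    · have := le_max_right (σ*((n:ℝ)-2)/2) (0:ℝ)
      linarith
    · have := min_le_left (1:ℝ) ((n:ℝ)/2)
      have := le_max_right (σ*((n:ℝ)-2)/2) (0:ℝ)
      linarith
    · have := min_le_right (1:ℝ) ((n:ℝ)/2)
      have := le_max_right (σ*((n:ℝ)-2)/2) (0:ℝ)
      linarith
    · have := le_max_left (σ*((n:ℝ)-2)/2) (0:ℝ)
      linarith
  have hdn' : d/(n:ℝ) < 1/2 := by rw [div_lt_iff₀ hn0]; linarith
  have hdn0 : 0 < d/(n:ℝ) := div_pos hd0 hn0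
  have hx0 : 0 < 1/2 - d/(n:ℝ) := by linarith
  have h1d : 0 < 1 - d := by linarith
  refine ⟨2/d, 1/(1/2 - d/(n:ℝ)), σ*(n:ℝ)/d, 2*σ/(1-d), ⟨?_, ?_, ?_⟩, ?_, ?_, ?_, ?_, ?_⟩
  · rw [le_div_iff₀ hx0]; linarith
  · intro h3
    have hn2 : (0:ℝ) < (n:ℝ) - 2 := by
      have : (3:ℝ) ≤ (n:ℝ) := by exact_mod_cast h3
      linarith
    rw [div_lt_div_iff₀ hx0 hn2]
    have hc : (n:ℝ) * (d/(n:ℝ)) = d := by field_simp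
    nlinarith
  · rw [one_div_one_div]
    field_simp
    ring
  · rw [one_div_one_div]
    field_simp
    ring
  · field_simp
    ring
  · have : 0 < 2*σ/(1-d) := div_pos (by linarith) h1d
    positivity
  · have e1 : 2/(2*σ/(1-d)) = (1-d)/σ := by
      field_simp
    have e2 : (n:ℝ)*(1/2 - 1/(σ*(n:ℝ)/d)) = (n:ℝ)/2 - d/σ := by
      field_simp
    rw [e1, e2, div_lt_iff₀ hσ0]
    have hds : d/σ*σ = d := div_mul_cancel₀ d hσ0.ne'
    nlinarith
  · have e2 : (n:ℝ)*(1/2 - 1/(σ*(n:ℝ)/d)) = (n:ℝ)/2 - d/σ := by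
      field_simp
    rw [e2]
    have hds : d/σ*σ = d := div_mul_cancel₀ d hσ0.ne'
    nlinarith
end

section
/- For every σ > 0 there exists a constant C > 0 such that for all complex numbers z₁, z₂: ||z₁+z₂|^{2σ}(z₁+z₂) - |z₁|^{2σ}z₁ - |z₂|^{2σ}z₂| ≤ C(|z₁|^{2σ}|z₂| + |z₂|^{2σ}|z₁|). -/
/-!
Write `g u = ‖u‖ ^ p • u`. From `g u - g v = ‖u‖ ^ p • (u - v) + (‖u‖ ^ p - ‖v‖ ^ p) • v` and the
elementary bound `(a ^ p - b ^ p) b ≤ max 1 p · a ^ p (a - b)` for `0 ≤ b ≤ a` (Bernoulli's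
inequality when `p ≥ 1`, `t ≤ t ^ p` on `[0, 1]` when `p ≤ 1`) one gets the local Lipschitz bound
`‖g u - g v‖ ≲ max ‖u‖ ‖v‖ ^ p ‖u - v‖`. When `‖z₂‖ ≤ ‖z₁‖`, applying it to `u = z₁ + z₂`, `v = z₁`
bounds `g (z₁ + z₂) - g z₁` by `‖z₁‖ ^ p ‖z₂‖`, while `‖g z₂‖ = ‖z₂‖ ^ p ‖z₂‖ ≤ ‖z₂‖ ^ p ‖z₁‖`.
-/

open Real

theorem one_sub_rpow_le_max_mul {t : ℝ} (p : ℝ) (ht₀ : 0 ≤ t) (ht₁ : t ≤ 1) :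
    1 - t ^ p ≤ max 1 p * (1 - t) := by
  rcases le_total p 1 with hp | hp
  · have : t ≤ t ^ p := self_le_rpow_of_le_one ht₀ ht₁ hp
    nlinarith [le_max_left 1 p]
  · have bernoulli := one_add_mul_self_le_rpow_one_add (s := t - 1) (by linarith) hp
    rw [add_sub_cancel] at bernoulli
    nlinarith [le_max_right 1 p]

theorem rpow_sub_rpow_mul_le {a b p : ℝ} (hp : 0 ≤ p) (hb : 0 ≤ b) (hba : b ≤ a) :
    (a ^ p - b ^ p) * b ≤ max 1 p * a ^ p * (a - b) := by
  obtain rfl | ha := (hb.trans hba).eq_or_lt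
  · simp [le_antisymm hba hb]
  have hbp : b ^ p = a ^ p * (b / a) ^ p := by
    rw [← mul_rpow ha.le (div_nonneg hb ha.le), mul_div_cancel₀ _ ha.ne']
  have hdiff : a ^ p * (1 - (b / a) ^ p) ≤ a ^ p * (max 1 p * (1 - b / a)) :=
    mul_le_mul_of_nonneg_left
      (one_sub_rpow_le_max_mul p (div_nonneg hb ha.le) ((div_le_one ha).mpr hba))
      (rpow_nonneg ha.le p)
  calc (a ^ p - b ^ p) * b
      ≤ (a ^ p - b ^ p) * a :=
        mul_le_mul_of_nonneg_left hba (sub_nonneg.mpr (rpow_le_rpow hb hba hp))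
    _ = a ^ p * (1 - (b / a) ^ p) * a := by rw [hbp]; ring
    _ ≤ a ^ p * (max 1 p * (1 - b / a)) * a := by gcongr
    _ = max 1 p * a ^ p * (a - b) := by field_simp

section NormedSpace

variable {E : Type*} [SeminormedAddCommGroup E] [NormedSpace ℝ E]

/-- The paper's `g` is `normRpowSMul (2 * σ)`. -/
noncomputable def normRpowSMul (p : ℝ) (x : E) : E := ‖x‖ ^ p • x

theorem norm_normRpowSMul (p : ℝ) (x : E) : ‖normRpowSMul p x‖ = ‖x‖ ^ p * ‖x‖ := by
  rw [normRpowSMul, norm_smul, norm_of_nonneg (rpow_nonneg (norm_nonneg x) p)]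

theorem norm_normRpowSMul_sub_le_of_norm_le {p : ℝ} (hp : 0 ≤ p) {u v : E} (hvu : ‖v‖ ≤ ‖u‖) :
    ‖normRpowSMul p u - normRpowSMul p v‖ ≤ (1 + max 1 p) * ‖u‖ ^ p * ‖u - v‖ := by
  have hsplit : normRpowSMul p u - normRpowSMul p v
      = ‖u‖ ^ p • (u - v) + (‖u‖ ^ p - ‖v‖ ^ p) • v := by
    simp only [normRpowSMul, smul_sub, sub_smul]; abel
  have hpow : ‖v‖ ^ p ≤ ‖u‖ ^ p := rpow_le_rpow (norm_nonneg v) hvu hp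
  calc ‖normRpowSMul p u - normRpowSMul p v‖
      ≤ ‖u‖ ^ p * ‖u - v‖ + (‖u‖ ^ p - ‖v‖ ^ p) * ‖v‖ := by
        rw [hsplit]
        refine (norm_add_le _ _).trans_eq ?_
        rw [norm_smul, norm_smul, norm_of_nonneg (rpow_nonneg (norm_nonneg u) p),
          norm_of_nonneg (sub_nonneg.mpr hpow)]
    _ ≤ ‖u‖ ^ p * ‖u - v‖ + max 1 p * ‖u‖ ^ p * (‖u‖ - ‖v‖) := by
        have := rpow_sub_rpow_mul_le hp (norm_nonneg v) hvu
        linarith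
    _ ≤ ‖u‖ ^ p * ‖u - v‖ + max 1 p * ‖u‖ ^ p * ‖u - v‖ := by
        have : 0 ≤ max 1 p := zero_le_one.trans (le_max_left 1 p)
        gcongr
        exact norm_sub_norm_le u v
    _ = (1 + max 1 p) * ‖u‖ ^ p * ‖u - v‖ := by ring

theorem norm_normRpowSMul_sub_le {p : ℝ} (hp : 0 ≤ p) (u v : E) :
    ‖normRpowSMul p u - normRpowSMul p v‖ ≤ (1 + max 1 p) * max ‖u‖ ‖v‖ ^ p * ‖u - v‖ := by
  rcases le_total ‖v‖ ‖u‖ with hvu | huv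
  · rw [max_eq_left hvu]
    exact norm_normRpowSMul_sub_le_of_norm_le hp hvu
  · rw [max_eq_right huv, norm_sub_rev, norm_sub_rev u]
    exact norm_normRpowSMul_sub_le_of_norm_le hp huv

theorem norm_normRpowSMul_add_sub_le_of_norm_le {p : ℝ} (hp : 0 ≤ p) {x y : E}
    (hyx : ‖y‖ ≤ ‖x‖) :
    ‖normRpowSMul p (x + y) - normRpowSMul p x - normRpowSMul p y‖
      ≤ ((1 + max 1 p) * 2 ^ p + 1) * (‖x‖ ^ p * ‖y‖ + ‖y‖ ^ p * ‖x‖) := by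
  have hsum : max ‖x + y‖ ‖x‖ ≤ 2 * ‖x‖ :=
    max_le (by linarith [norm_add_le x y]) (by linarith [norm_nonneg x])
  have hfirst : ‖normRpowSMul p (x + y) - normRpowSMul p x‖
      ≤ (1 + max 1 p) * 2 ^ p * ‖x‖ ^ p * ‖y‖ :=
    calc ‖normRpowSMul p (x + y) - normRpowSMul p x‖
        ≤ (1 + max 1 p) * max ‖x + y‖ ‖x‖ ^ p * ‖y‖ := by
          simpa only [add_sub_cancel_left] using norm_normRpowSMul_sub_le hp (x + y) x
      _ ≤ (1 + max 1 p) * (2 * ‖x‖) ^ p * ‖y‖ := by gcongr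
      _ = (1 + max 1 p) * 2 ^ p * ‖x‖ ^ p * ‖y‖ := by
          rw [mul_rpow zero_le_two (norm_nonneg x)]; ring
  have hsecond : ‖normRpowSMul p y‖ ≤ ‖y‖ ^ p * ‖x‖ := by
    rw [norm_normRpowSMul]; gcongr
  have : 0 ≤ (1 + max 1 p) * 2 ^ p * ‖y‖ ^ p * ‖x‖ := by positivity
  have : 0 ≤ ‖x‖ ^ p * ‖y‖ := by positivity
  calc ‖normRpowSMul p (x + y) - normRpowSMul p x - normRpowSMul p y‖
      ≤ ‖normRpowSMul p (x + y) - normRpowSMul p x‖ + ‖normRpowSMul p y‖ := norm_sub_le _ _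
    _ ≤ ((1 + max 1 p) * 2 ^ p + 1) * (‖x‖ ^ p * ‖y‖ + ‖y‖ ^ p * ‖x‖) := by nlinarith

theorem norm_normRpowSMul_add_sub_le {p : ℝ} (hp : 0 ≤ p) (x y : E) :
    ‖normRpowSMul p (x + y) - normRpowSMul p x - normRpowSMul p y‖
      ≤ ((1 + max 1 p) * 2 ^ p + 1) * (‖x‖ ^ p * ‖y‖ + ‖y‖ ^ p * ‖x‖) := by
  rcases le_total ‖y‖ ‖x‖ with hyx | hxy
  · exact norm_normRpowSMul_add_sub_le_of_norm_le hp hyx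
  · have := norm_normRpowSMul_add_sub_le_of_norm_le hp hxy
    rwa [add_comm y x, sub_right_comm, add_comm (‖y‖ ^ p * ‖x‖)] at this

end NormedSpace

/-- For every `σ > 0` there exists `C > 0` such that for all `z₁ z₂ : ℂ`,
`| g(z₁+z₂) - g(z₁) - g(z₂) | ≤ C (|z₁|^{2σ}|z₂| + |z₂|^{2σ}|z₁|)`,
where `g(z) = |z|^{2σ} z`. -/
theorem nonlinearity_superposition_estimate (σ : ℝ) (hσ : 0 < σ) :
    ∃ C > 0, ∀ z₁ z₂ : ℂ,
      ‖(‖z₁ + z₂‖ ^ (2 * σ) : ℝ) * (z₁ + z₂)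
          - (‖z₁‖ ^ (2 * σ) : ℝ) * z₁
          - (‖z₂‖ ^ (2 * σ) : ℝ) * z₂‖
        ≤ C * (‖z₁‖ ^ (2 * σ) * ‖z₂‖
          + ‖z₂‖ ^ (2 * σ) * ‖z₁‖) := by
  have hp : 0 ≤ 2 * σ := by positivity
  refine ⟨(1 + max 1 (2 * σ)) * 2 ^ (2 * σ) + 1, by positivity, fun z₁ z₂ => ?_⟩
  simpa only [normRpowSMul, Complex.real_smul] using norm_normRpowSMul_add_sub_le hp z₁ z₂
end
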